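/- arXiv:1903.00125 — 2 statements merged into one kernel-verified Lean document; each statement's English description precedes it below -/
import Mathlib

section
/- Let n ∈ ℕ, m > 0, λ ∈ [1/3,1], K > 0 with K ≥ √(b_λ Rⁿ), T > 0, and let B ∈ C¹([0,T)) be positive and nonincreasing with B(t) ≤ K²/(4(a_λ + b_λ)²) and K√(B(t)) < Rⁿ for all t ∈ [0,T). Then A′(t) ≤ 0 for all t ∈ (0,T), and in particular A(t) ≥ A_T := (m/ω_n)·1/(1 + a_λ Rⁿ/K²) for all t ∈ (0,T). -/
open Real Set

/-- `a_λ := (1-λ)²/(2λ)`. -/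
noncomputable def aL (l : ℝ) : ℝ := (1 - l) ^ 2 / (2 * l)

/-- `b_λ := (3λ-1)/(2λ)`. -/
noncomputable def bL (l : ℝ) : ℝ := (3 * l - 1) / (2 * l)

/-- `ω_n`, the `(n-1)`-dimensional measure of the unit sphere in `ℝⁿ`,
equals `n` times the volume of the unit ball. -/
noncomputable def omegaN (n : ℕ) : ℝ :=
  (n : ℝ) * (MeasureTheory.volume (Metric.ball (0 : EuclideanSpace ℝ (Fin n)) 1)).toReal

/-- The comparison profile `φ`. -/
noncomputable def phi (l d ξ : ℝ) : ℝ :=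
  if ξ < 1 then (2 * l / (d * Real.exp d)) * (Real.exp (d * ξ) - 1)
  else 1 - aL l / (ξ - bL l)

/-- The derivative `φ'`. -/
noncomputable def phiD (l d ξ : ℝ) : ℝ :=
  if ξ < 1 then 2 * l * Real.exp (d * (ξ - 1)) else aL l / (ξ - bL l) ^ 2

/-- The second derivative `φ''`. -/
noncomputable def phiDD (l d ξ : ℝ) : ℝ :=
  if ξ < 1 then 2 * d * l * Real.exp (d * (ξ - 1)) else -2 * aL l / (ξ - bL l) ^ 3

/-- `N(t)`. -/
noncomputable def Nf (l R K : ℝ) (n : ℕ) (B : ℝ → ℝ) (t : ℝ) : ℝ :=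
  K ^ 2 + aL l * R ^ n - (aL l + bL l) * (2 * K * Real.sqrt (B t) - bL l * B t)

/-- `A(t)`. -/
noncomputable def Af (m ωn l R K : ℝ) (n : ℕ) (B : ℝ → ℝ) (t : ℝ) : ℝ :=
  (m / ωn) * (K ^ 2 - 2 * bL l * K * Real.sqrt (B t) + (bL l) ^ 2 * B t) / Nf l R K n B t

/-- `D(t)`. -/
noncomputable def Df (m ωn l R K : ℝ) (n : ℕ) (B : ℝ → ℝ) (t : ℝ) : ℝ :=
  (m / ωn) * aL l / Nf l R K n B t

/-- `E(t) := m/ω_n - Rⁿ D(t)`. -/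
noncomputable def Ef (m ωn l R K : ℝ) (n : ℕ) (B : ℝ → ℝ) (t : ℝ) : ℝ :=
  m / ωn - R ^ n * Df m ωn l R K n B t

/-- `A_T := (m/ω_n)·1/(1 + a_λ Rⁿ/K²)`. -/
noncomputable def AT (m ωn l R K : ℝ) (n : ℕ) : ℝ :=
  (m / ωn) * (1 / (1 + aL l * R ^ n / K ^ 2))

/-- The parabolic operator `𝒫`. -/
noncomputable def Pop (n : ℕ) (χ p q μ : ℝ) (w : ℝ → ℝ → ℝ) (s t : ℝ) : ℝ :=
  deriv (fun τ => w s τ) t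
    - (n : ℝ) ^ (p + 1) * (s ^ (2 - 2 / (n : ℝ)) * (deriv (fun σ => w σ t) s) ^ p
        * deriv (deriv (fun σ => w σ t)) s)
      / Real.sqrt ((deriv (fun σ => w σ t) s) ^ 2
        + (n : ℝ) ^ 2 * s ^ (2 - 2 / (n : ℝ)) * (deriv (deriv (fun σ => w σ t)) s) ^ 2)
    - (n : ℝ) ^ q * χ * ((w s t - (μ / (n : ℝ)) * s) * (deriv (fun σ => w σ t) s) ^ q)
      / Real.sqrt (1 + s ^ (2 / (n : ℝ) - 2) * (w s t - (μ / (n : ℝ)) * s) ^ 2)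

/-- `J₁(s,t)`. -/
noncomputable def J1 (n : ℕ) (p m ωn l R K d : ℝ) (B : ℝ → ℝ) (s t : ℝ) : ℝ :=
  -(n : ℝ) ^ (p + 1) * ((s / B t) ^ (2 - 2 / (n : ℝ)) * phiDD l d (s / B t))
    / Real.sqrt ((B t) ^ (4 / (n : ℝ) - 2) * (phiD l d (s / B t)) ^ 2
        + (n : ℝ) ^ 2 * (B t) ^ (2 / (n : ℝ) - 2) * (s / B t) ^ (2 - 2 / (n : ℝ))
          * (phiDD l d (s / B t)) ^ 2)
    * (Af m ωn l R K n B t * phiD l d (s / B t) / B t) ^ (p - 1)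

/-- `J₂(s,t)`. -/
noncomputable def J2 (n : ℕ) (q χ m ωn l R K d μ : ℝ) (B : ℝ → ℝ) (s t : ℝ) : ℝ :=
  -(n : ℝ) ^ q * χ
      * (Af m ωn l R K n B t * phi l d (s / B t) - (μ / (n : ℝ)) * B t * (s / B t))
    / Real.sqrt (1 + (B t) ^ (2 / (n : ℝ) - 2) * (s / B t) ^ (2 / (n : ℝ) - 2)
        * (Af m ωn l R K n B t * phi l d (s / B t) - (μ / (n : ℝ)) * B t * (s / B t)) ^ 2)
    * (Af m ωn l R K n B t * phiD l d (s / B t) / B t) ^ (q - 1)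

/-!
Write `s = √B(t)`. Then `A(t) = (m/ω_n) g(s)` with
`g(s) = (K - b_λ s)² / (K² + a_λ Rⁿ - (a_λ + b_λ)(2Ks - b_λ s²))` (`Aprofile` below),
and cross-multiplying gives `g(y) - g(x) ∝ a_λ (K² - b_λ Rⁿ)(y - x)(2K - b_λ(x + y))`,
so `g` is nondecreasing on `s ≤ K / (2(a_λ + b_λ))`, the range allowed
for `√B` by the hypothesis on `B`. Hence `A` is nonincreasing,
which forces `A' ≤ 0`, and `A(t) ≥ (m/ω_n) g(0) = A_T`.
-/

lemma aL_nonneg {l : ℝ} (hl : 0 < l) : 0 ≤ aL l := by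
  unfold aL; positivity

lemma bL_nonneg {l : ℝ} (hl : 1 / 3 ≤ l) : 0 ≤ bL l :=
  div_nonneg (by linarith) (by linarith)

lemma aL_add_bL {l : ℝ} (hl : l ≠ 0) : aL l + bL l = (l + 1) / 2 := by
  unfold aL bL; field_simp; ring

lemma omegaN_nonneg (n : ℕ) : 0 ≤ omegaN n := by
  unfold omegaN; positivity

noncomputable def Aprofile (a b K ρ s : ℝ) : ℝ :=
  (K - b * s) ^ 2 / (K ^ 2 + a * ρ - (a + b) * (2 * K * s - b * s ^ 2))

section Aprofile

variable {a b K ρ : ℝ}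

lemma Aprofile_den_pos (ha : 0 ≤ a) (hb : 0 ≤ b) (hρ : 0 < ρ) (hK : 0 < K) {s : ℝ}
    (hsK : 2 * (a + b) * s ≤ K) :
    0 < K ^ 2 + a * ρ - (a + b) * (2 * K * s - b * s ^ 2) := by
  rcases ha.eq_or_lt with rfl | ha
  · have : 0 < K - b * s := by nlinarith
    nlinarith
  · nlinarith [mul_nonneg (mul_nonneg (add_nonneg ha.le hb) hb) (sq_nonneg s)]

lemma Aprofile_monotoneOn (ha : 0 ≤ a) (hb : 0 ≤ b) (hρ : 0 < ρ) (hK : 0 < K)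
    (hbρ : b * ρ ≤ K ^ 2) :
    MonotoneOn (Aprofile a b K ρ) {s | 2 * (a + b) * s ≤ K} := by
  intro x (hxK : 2 * (a + b) * x ≤ K) y (hyK : 2 * (a + b) * y ≤ K) hxy
  have cross : (K - b * y) ^ 2 * (K ^ 2 + a * ρ - (a + b) * (2 * K * x - b * x ^ 2))
      - (K - b * x) ^ 2 * (K ^ 2 + a * ρ - (a + b) * (2 * K * y - b * y ^ 2))
      = a * (K ^ 2 - b * ρ) * (y - x) * (2 * K - b * (x + y)) := by ring
  have hby : 2 * b * y ≤ K := by rcases le_total 0 y with hy | hy <;> nlinarith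
  have hfactor : 0 ≤ 2 * K - b * (x + y) := by nlinarith
  unfold Aprofile
  rw [div_le_div_iff₀ (Aprofile_den_pos ha hb hρ hK hxK) (Aprofile_den_pos ha hb hρ hK hyK)]
  have := mul_nonneg (mul_nonneg (mul_nonneg ha (sub_nonneg.2 hbρ)) (sub_nonneg.2 hxy)) hfactor
  linarith

end Aprofile

lemma Af_eq_Aprofile {m ω l R K : ℝ} {n : ℕ} {B : ℝ → ℝ} {t : ℝ} (hB : 0 ≤ B t) :
    Af m ω l R K n B t = m / ω * Aprofile (aL l) (bL l) K (R ^ n) (√(B t)) := by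
  unfold Af Nf Aprofile
  have hsq := Real.sq_sqrt hB
  set s := √(B t)
  rw [← hsq]
  ring

lemma AT_eq_Aprofile_zero {m ω l R K : ℝ} {n : ℕ} (hK : K ≠ 0) :
    AT m ω l R K n = m / ω * Aprofile (aL l) (bL l) K (R ^ n) 0 := by
  unfold AT Aprofile
  field_simp
  ring_nf

lemma two_mul_mul_sqrt_le {c K x : ℝ} (hc : 0 < c) (hK : 0 ≤ K)
    (hx : x ≤ K ^ 2 / (4 * c ^ 2)) : 2 * c * √x ≤ K := by
  rw [mul_comm, ← le_div_iff₀ (by positivity), Real.sqrt_le_left (by positivity)]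
  convert hx using 1
  ring

theorem stmt9_general (n : ℕ) (R m l K T : ℝ) (hR : 0 < R) (hm : 0 < m)
    (hl : l ∈ Set.Icc (1/3 : ℝ) 1) (hK : 0 < K) (hKb : Real.sqrt (bL l * R ^ n) ≤ K)
    (B : ℝ → ℝ)
    (hBpos : ∀ t ∈ Set.Ico (0 : ℝ) T, 0 < B t)
    (hBanti : AntitoneOn B (Set.Ico 0 T))
    (hBle : ∀ t ∈ Set.Ico (0 : ℝ) T, B t ≤ K ^ 2 / (4 * (aL l + bL l) ^ 2)) :
    ∀ t ∈ Set.Ioo (0 : ℝ) T,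
      deriv (Af m (omegaN n) l R K n B) t ≤ 0 ∧
      AT m (omegaN n) l R K n ≤ Af m (omegaN n) l R K n B t := by
  intro t ht
  have hl0 : 0 < l := by linarith [hl.1]
  have hc : 0 ≤ m / omegaN n := div_nonneg hm.le (omegaN_nonneg n)
  have hab : 0 < aL l + bL l := by rw [aL_add_bL hl0.ne']; linarith
  have hmono := Aprofile_monotoneOn (aL_nonneg hl0) (bL_nonneg hl.1) (pow_pos hR n) hK
    ((Real.sqrt_le_left hK.le).1 hKb)
  have hmem (τ : ℝ) (hτ : τ ∈ Ico 0 T) : √(B τ) ∈ {s | 2 * (aL l + bL l) * s ≤ K} :=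
    two_mul_mul_sqrt_le hab hK.le (hBle τ hτ)
  have hAanti : AntitoneOn (Af m (omegaN n) l R K n B) (Ico 0 T) := by
    intro x hx y hy hxy
    rw [Af_eq_Aprofile (hBpos x hx).le, Af_eq_Aprofile (hBpos y hy).le]
    exact mul_le_mul_of_nonneg_left
      (hmono (hmem y hy) (hmem x hx) (Real.sqrt_le_sqrt (hBanti hx hy hxy))) hc
  have ht' : t ∈ Ico 0 T := Ioo_subset_Ico_self ht
  refine ⟨?_, ?_⟩
  · rw [← derivWithin_of_mem_nhds (Ico_mem_nhds ht.1 ht.2)]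
    exact hAanti.derivWithin_nonpos
  · rw [AT_eq_Aprofile_zero hK.ne', Af_eq_Aprofile (hBpos t ht').le]
    exact mul_le_mul_of_nonneg_left
      (hmono (by simpa using hK.le) (hmem t ht') (Real.sqrt_nonneg _)) hc

/-- `A' ≤ 0` on `(0,T)`, and in particular `A(t) ≥ A_T` there. -/
theorem stmt9 (n : ℕ) (hn : 0 < n) (R m l K T : ℝ) (hR : 0 < R) (hm : 0 < m)
    (hl : l ∈ Set.Icc (1/3 : ℝ) 1) (hK : 0 < K) (hKb : Real.sqrt (bL l * R ^ n) ≤ K)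
    (hT : 0 < T)
    (B B' : ℝ → ℝ)
    (hB : ∀ t ∈ Set.Ico (0 : ℝ) T, HasDerivAt B (B' t) t)
    (hB'c : ContinuousOn B' (Set.Ico 0 T))
    (hBpos : ∀ t ∈ Set.Ico (0 : ℝ) T, 0 < B t)
    (hBanti : AntitoneOn B (Set.Ico 0 T))
    (hBle : ∀ t ∈ Set.Ico (0 : ℝ) T, B t ≤ K ^ 2 / (4 * (aL l + bL l) ^ 2))
    (hBR : ∀ t ∈ Set.Ico (0 : ℝ) T, K * Real.sqrt (B t) < R ^ n) :
    ∀ t ∈ Set.Ioo (0 : ℝ) T,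
      deriv (Af m (omegaN n) l R K n B) t ≤ 0 ∧
      AT m (omegaN n) l R K n ≤ Af m (omegaN n) l R K n B t :=
  stmt9_general n R m l K T hR hm hl hK hKb B hBpos hBanti hBle
end

section
/- Let n ≥ 2, p, q ≥ 1 with p ≤ q, m > 0, and λ = 1/3 (so a_λ = 2/3 and b_λ = 0). Then for every χ > (mn/(ω_n Rⁿ))^{p−q} there exist K > 0, κ_n > 0, and B₀ₙ ∈ (0,1) with K√B₀ₙ < Rⁿ such that whenever T > 0 and B ∈ C¹([0,T)) is positive and nonincreasing with B(0) ≤ B₀ₙ and B′(t) ≥ −κ_n B(t)^{1−1/(2n)} for all t ∈ (0,T), one has (𝒫 w_in)(s,t) ≤ 0 for all t ∈ (0,T) and all s ∈ (B(t), K√(B(t))). -/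
open Real Set

/-!
On the intermediate region `B < s < K√B` the profile is on its outer branch,
`w_in = A(t) (1 - 2B/(3s))`, so `∂ₛw_in = 2AB/(3s²) > 0`. All three terms of `𝒫 w_in` are
compared with `M = χ nᵠ s^{1-1/n} (∂ₛw_in)ᵠ`:
* the chemotaxis term is at least `(1 - ε) M`, because `s^{1/n-1} (w_in - μs/n)` is large once
  `K√B₀` is small;
* the diffusion term is at most `nᵖ s^{1-1/n} (∂ₛw_in)ᵖ ≤ W^{p-q} M`, since `n ∂ₛw_in ≥ W` (the
  `slopeBound`) and `p ≤ q`; as `K → 0`, `W → μ`, so a small `K` gives `W^{p-q} = (1 - 2ε) χ`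
  with `ε > 0`;
* `A` is nonincreasing and `-B' ≤ κ B^{1-1/(2n)}`, so the time derivative is at most `ε M` once
  `s < K√B` converts the power of `B` into powers of `s`.
-/

open Filter Topology

lemma HasDerivAt.nonpos_of_antitoneOn_of_mem_nhds {g : ℝ → ℝ} {g' x : ℝ} {S : Set ℝ}
    (hd : HasDerivAt g g' x) (hg : AntitoneOn g S) (hS : S ∈ 𝓝 x) : g' ≤ 0 := by
  refine hd.hasDerivWithinAt.nonpos_of_antitoneOn ?_ hg
  rw [AccPt, inf_of_le_left (le_principal_iff.2 (mem_nhdsWithin_of_mem_nhds hS))]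
  infer_instance

lemma neg_div_sqrt_sq_add_sq_le_one (u x : ℝ) : -x / √(u ^ 2 + x ^ 2) ≤ 1 := by
  rcases (Real.sqrt_nonneg (u ^ 2 + x ^ 2)).eq_or_lt with h | h
  · rw [← h, div_zero]; exact zero_le_one
  rw [div_le_one h]
  exact (neg_le_abs x).trans (Real.abs_le_sqrt (by nlinarith))

lemma one_sub_le_div_sqrt_one_add_sq {ε x : ℝ} (hε : 0 < ε) (hε1 : ε ≤ 1)
    (hx : (1 - ε) / ε ≤ x) : 1 - ε ≤ x / √(1 + x ^ 2) := by
  have hεx : 1 - ε ≤ ε * x := by rwa [div_le_iff₀' hε] at hx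
  have hx0 : 0 ≤ x := by nlinarith
  have hsqrt : √(1 + x ^ 2) ≤ 1 + x := Real.sqrt_le_iff.2 ⟨by linarith, by nlinarith⟩
  rw [le_div_iff₀ (Real.sqrt_pos.2 (by positivity))]
  nlinarith

lemma rpow_le_rpow_sub_mul_rpow {a x p q : ℝ} (ha : 0 < a) (hax : a ≤ x) (hpq : p ≤ q) :
    x ^ p ≤ a ^ (p - q) * x ^ q := by
  have hx : 0 < x := ha.trans_le hax
  calc x ^ p = x ^ (p - q) * x ^ q := by rw [← Real.rpow_add hx, sub_add_cancel]
    _ ≤ a ^ (p - q) * x ^ q := by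
      gcongr ?_ * _
      exact Real.rpow_le_rpow_of_nonpos ha hax (by linarith)

lemma rpow_mul_rpow_half_le {K b s e : ℝ} (hK : 0 < K) (hb : 0 < b) (hs : 0 < s)
    (hsK : s ≤ K * √b) (he : e ≤ 0) : K ^ e * b ^ (e / 2) ≤ s ^ e := by
  calc K ^ e * b ^ (e / 2) = (K * √b) ^ e := by
        rw [Real.mul_rpow hK.le (Real.sqrt_nonneg b), Real.sqrt_eq_rpow, ← Real.rpow_mul hb.le]
        ring_nf
    _ ≤ s ^ e := Real.rpow_le_rpow_of_nonpos hs hsK he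

lemma exists_pos_eq_one_sub_two_mul_mul {a χ : ℝ} (ha : 0 ≤ a) (haχ : a < χ) :
    ∃ ε, 0 < ε ∧ a = (1 - 2 * ε) * χ := by
  have hχ : 0 < χ := ha.trans_lt haχ
  exact ⟨(χ - a) / (2 * χ), div_pos (by linarith) (by positivity), by field_simp; ring⟩

lemma mul_sqrt_le_of_le_div_sq {K r x : ℝ} (hK : 0 < K) (hr : 0 ≤ r) (hx : x ≤ (r / K) ^ 2) :
    K * √x ≤ r := by
  calc K * √x ≤ K * (r / K) := by gcongr; exact Real.sqrt_le_iff.2 ⟨by positivity, hx⟩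
    _ = r := mul_div_cancel₀ _ hK.ne'

lemma omegaN_pos {n : ℕ} (hn : n ≠ 0) : 0 < omegaN n := by
  have : NeZero n := ⟨hn⟩
  exact mul_pos (by positivity) (ENNReal.toReal_pos (Metric.measure_ball_pos _ _ one_pos).ne'
    MeasureTheory.measure_ball_lt_top.ne)

section Operator

variable {n s : ℝ}

lemma neg_diffusion_term_le (p v : ℝ) {u : ℝ} (hn : 0 < n) (hs : 0 < s) (hu : 0 ≤ u) :
    -(n ^ (p + 1) * (s ^ (2 - 2 / n) * u ^ p * v) / √(u ^ 2 + n ^ 2 * s ^ (2 - 2 / n) * v ^ 2))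
      ≤ n ^ p * s ^ (1 - 1 / n) * u ^ p := by
  set S := s ^ (1 - 1 / n)
  have hS : s ^ (2 - 2 / n) = S ^ 2 := by
    rw [← Real.rpow_two, ← Real.rpow_mul hs.le]; ring_nf
  have key := neg_div_sqrt_sq_add_sq_le_one u (n * S * v)
  have hc : 0 ≤ n ^ p * S * u ^ p := by positivity
  calc _ = n ^ p * S * u ^ p * (-(n * S * v) / √(u ^ 2 + (n * S * v) ^ 2)) := by
        rw [hS, Real.rpow_add_one hn.ne']; ring_nf
    _ ≤ n ^ p * S * u ^ p := mul_le_of_le_one_right hc key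

lemma le_chemotaxis_term (q : ℝ) {χ ε u y : ℝ} (hn : 0 ≤ n) (hs : 0 < s) (hχ : 0 ≤ χ)
    (hu : 0 ≤ u) (hε : 0 < ε) (hε1 : ε ≤ 1) (hy : (1 - ε) / ε ≤ s ^ (1 / n - 1) * y) :
    (1 - ε) * (χ * n ^ q * s ^ (1 - 1 / n) * u ^ q)
      ≤ n ^ q * χ * (y * u ^ q) / √(1 + s ^ (2 / n - 2) * y ^ 2) := by
  set z := s ^ (1 / n - 1)
  have hz : 0 < z := by positivity
  have hS : s ^ (1 - 1 / n) = z⁻¹ := by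
    rw [← Real.rpow_neg hs.le]; ring_nf
  have hz2 : s ^ (2 / n - 2) = z ^ 2 := by
    rw [← Real.rpow_two, ← Real.rpow_mul hs.le]; ring_nf
  have key := one_sub_le_div_sqrt_one_add_sq hε hε1 hy
  have hc : 0 ≤ χ * n ^ q * z⁻¹ * u ^ q := by positivity
  calc (1 - ε) * (χ * n ^ q * s ^ (1 - 1 / n) * u ^ q)
      ≤ (z * y) / √(1 + (z * y) ^ 2) * (χ * n ^ q * z⁻¹ * u ^ q) := by
        rw [hS]; exact mul_le_mul_of_nonneg_right key hc
    _ = n ^ q * χ * (y * u ^ q) / √(1 + s ^ (2 / n - 2) * y ^ 2) := by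
        rw [hz2]; field_simp

end Operator

lemma Pop_eq {n : ℕ} {χ p q μ s t wt v : ℝ} {w : ℝ → ℝ → ℝ} {u : ℝ → ℝ}
    (hwt : HasDerivAt (fun τ => w s τ) wt t)
    (hu : ∀ᶠ σ in 𝓝 s, HasDerivAt (fun σ => w σ t) (u σ) σ) (hv : HasDerivAt u v s) :
    Pop n χ p q μ w s t = wt
      - (n : ℝ) ^ (p + 1) * (s ^ (2 - 2 / (n : ℝ)) * u s ^ p * v)
        / √(u s ^ 2 + (n : ℝ) ^ 2 * s ^ (2 - 2 / (n : ℝ)) * v ^ 2)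
      - (n : ℝ) ^ q * χ * ((w s t - μ / n * s) * u s ^ q)
        / √(1 + s ^ (2 / (n : ℝ) - 2) * (w s t - μ / n * s) ^ 2) := by
  have hderiv : deriv (fun σ => w σ t) =ᶠ[𝓝 s] u := hu.mono fun σ h => h.deriv
  rw [Pop, hwt.deriv, hderiv.eq_of_nhds, hderiv.deriv_eq, hv.deriv]

lemma Pop_nonpos_of_le {n : ℕ} {χ p q μ s t wt v ε W : ℝ} {w : ℝ → ℝ → ℝ} {u : ℝ → ℝ}
    (hn : n ≠ 0) (hs : 0 < s) (hpq : p ≤ q) (hχ : 0 ≤ χ) (hε : 0 < ε) (hW : 0 < W)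
    (hwt : HasDerivAt (fun τ => w s τ) wt t)
    (hu : ∀ᶠ σ in 𝓝 s, HasDerivAt (fun σ => w σ t) (u σ) σ) (hv : HasDerivAt u v s)
    (hWu : W ≤ n * u s) (hWχ : W ^ (p - q) ≤ (1 - 2 * ε) * χ)
    (hy : (1 - ε) / ε ≤ s ^ (1 / (n : ℝ) - 1) * (w s t - μ / n * s))
    (hwt_le : wt ≤ ε * (χ * (n : ℝ) ^ q * s ^ (1 - 1 / (n : ℝ)) * u s ^ q)) :
    Pop n χ p q μ w s t ≤ 0 := by
  have hn' : (0 : ℝ) < n := by positivity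
  have hu0 : 0 ≤ u s := by nlinarith
  have hε1 : ε ≤ 1 := by nlinarith [Real.rpow_pos_of_pos hW (p - q)]
  have hdiff : (n : ℝ) ^ p * s ^ (1 - 1 / (n : ℝ)) * u s ^ p
      ≤ (1 - 2 * ε) * (χ * (n : ℝ) ^ q * s ^ (1 - 1 / (n : ℝ)) * u s ^ q) := by
    have hcmp := rpow_le_rpow_sub_mul_rpow hW hWu hpq
    rw [Real.mul_rpow hn'.le hu0, Real.mul_rpow hn'.le hu0] at hcmp
    calc (n : ℝ) ^ p * s ^ (1 - 1 / (n : ℝ)) * u s ^ p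
        = s ^ (1 - 1 / (n : ℝ)) * (n ^ p * u s ^ p) := by ring
      _ ≤ s ^ (1 - 1 / (n : ℝ)) * (W ^ (p - q) * (n ^ q * u s ^ q)) := by gcongr
      _ ≤ s ^ (1 - 1 / (n : ℝ)) * ((1 - 2 * ε) * χ * (n ^ q * u s ^ q)) := by gcongr
      _ = _ := by ring
  rw [Pop_eq hwt hu hv]
  linarith [neg_diffusion_term_le p v hn' hs hu0, le_chemotaxis_term q hn'.le hs hχ hu0 hε hε1 hy]

lemma rpow_mul_rpow_div_le {n q K b s : ℝ} (hn : 0 < n) (hq : 1 ≤ q) (hK : 0 < K) (hb : 0 < b)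
    (hs : 0 < s) (hsK : s ≤ K * √b) :
    K ^ (2 - 1 / n - 2 * q) * b ^ (1 - 1 / (2 * n)) / s ≤ s ^ (1 - 1 / n) * (b / s ^ 2) ^ q := by
  set e := 2 - 1 / n - 2 * q with he_def
  have he : e ≤ 0 := by
    have : 0 < 1 / n := by positivity
    linarith
  have hs_exp : s ^ (1 - 1 / n) * s = s ^ e * s ^ (2 * q) := by
    rw [← Real.rpow_add_one hs.ne', ← Real.rpow_add hs, he_def]; ring_nf
  have hsplit : s ^ (1 - 1 / n) * (b / s ^ 2) ^ q = s ^ e * b ^ q / s := by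
    rw [Real.div_rpow hb.le (by positivity), ← Real.rpow_natCast, ← Real.rpow_mul hs.le,
      Nat.cast_ofNat, eq_div_iff hs.ne', mul_div_assoc', div_mul_eq_mul_div,
      div_eq_iff (by positivity)]
    linear_combination b ^ q * hs_exp
  rw [hsplit, show 1 - 1 / (2 * n) = e / 2 + q by ring, Real.rpow_add hb, ← mul_assoc]
  gcongr
  exact rpow_mul_rpow_half_le hK hb hs hsK he

lemma time_deriv_le {n q χ ε κ K T A A' b b' s : ℝ} (hn : 0 < n) (hq : 1 ≤ q) (hK : 0 < K)
    (hχ : 0 ≤ χ) (hε : 0 ≤ ε) (hT : 0 < T) (hTA : T ≤ A) (hAT : A ≤ 2 * T) (hA' : A' ≤ 0)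
    (hb : 0 < b) (hbs : b < s) (hsK : s ≤ K * √b) (hb'0 : b' ≤ 0)
    (hb' : -κ * b ^ (1 - 1 / (2 * n)) ≤ b')
    (hκ : 4 / 3 * T * κ ≤ ε * χ * n ^ q * (2 / 3 * T) ^ q * K ^ (2 - 1 / n - 2 * q)) :
    A' * (1 - 2 / 3 * b / s) + A * (-(2 / 3) * b' / s)
      ≤ ε * (χ * n ^ q * s ^ (1 - 1 / n) * (2 / 3 * A * b / s ^ 2) ^ q) := by
  have hs : 0 < s := hb.trans hbs
  have hφ : 0 ≤ 1 - 2 / 3 * b / s := by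
    rw [sub_nonneg, div_le_one hs]; linarith
  have hscale := rpow_mul_rpow_div_le hn hq hK hb hs hsK
  have hpow : (2 / 3 * T * b / s ^ 2) ^ q = (2 / 3 * T) ^ q * (b / s ^ 2) ^ q := by
    rw [mul_div_assoc, Real.mul_rpow (by positivity) (by positivity)]
  calc A' * (1 - 2 / 3 * b / s) + A * (-(2 / 3) * b' / s)
      ≤ 0 + 2 / 3 * (2 * T) * (κ * b ^ (1 - 1 / (2 * n))) / s := by
        gcongr ?_ + ?_
        · exact mul_nonpos_of_nonpos_of_nonneg hA' hφ
        · have h : A * -b' ≤ 2 * T * (κ * b ^ (1 - 1 / (2 * n))) :=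
            mul_le_mul hAT (by linarith) (by linarith) (by positivity)
          rw [show A * (-(2 / 3) * b' / s) = 2 / 3 * (A * -b') / s by ring, mul_assoc (2 / 3)]
          gcongr
    _ = 4 / 3 * T * κ * (b ^ (1 - 1 / (2 * n)) / s) := by ring
    _ ≤ ε * χ * n ^ q * (2 / 3 * T) ^ q * K ^ (2 - 1 / n - 2 * q)
          * (b ^ (1 - 1 / (2 * n)) / s) := by gcongr
    _ ≤ ε * χ * n ^ q * (2 / 3 * T) ^ q * (s ^ (1 - 1 / n) * (b / s ^ 2) ^ q) := by
        rw [mul_assoc _ (K ^ _), ← mul_div_assoc]; gcongr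
    _ = ε * (χ * n ^ q * s ^ (1 - 1 / n) * (2 / 3 * T * b / s ^ 2) ^ q) := by
        rw [hpow]; ring
    _ ≤ ε * (χ * n ^ q * s ^ (1 - 1 / n) * (2 / 3 * A * b / s ^ 2) ^ q) := by
        gcongr

noncomputable def wIn (m R K d : ℝ) (n : ℕ) (B : ℝ → ℝ) (σ τ : ℝ) : ℝ :=
  Af m (omegaN n) (1 / 3) R K n B τ * phi (1 / 3) d (σ / B τ)

-- `n ∂ₛ w_in ≥ slopeBound` on the intermediate region, and at `K = 0` it equals `μ`.
noncomputable def slopeBound (m R K : ℝ) (n : ℕ) : ℝ :=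
  n * (2 / 3 * (m / omegaN n)) / (K ^ 2 + 2 / 3 * R ^ n)

lemma phi_third_of_one_le (d : ℝ) {ξ : ℝ} (hξ : 1 ≤ ξ) : phi (1 / 3) d ξ = 1 - 2 / 3 / ξ := by
  rw [phi, if_neg (not_lt.2 hξ)]; norm_num [aL, bL]

lemma Af_third (m ω R K : ℝ) (n : ℕ) (B : ℝ → ℝ) (t : ℝ) :
    Af m ω (1 / 3) R K n B t = m / ω * K ^ 2 / (K ^ 2 + 2 / 3 * R ^ n - 4 / 3 * K * √(B t)) := by
  norm_num [Af, Nf, aL, bL]; ring_nf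

lemma AT_third (m ω R : ℝ) {K : ℝ} (n : ℕ) (hK : K ≠ 0) :
    AT m ω (1 / 3) R K n = m / ω * K ^ 2 / (K ^ 2 + 2 / 3 * R ^ n) := by
  norm_num [AT, aL]; field_simp

section ThirdProfile

variable {m ω R K : ℝ} {n : ℕ} {B : ℝ → ℝ} {t : ℝ}

lemma AT_le_Af_third (hc : 0 ≤ m / ω) (hR : 0 < R) (hK : 0 < K)
    (hB : 4 / 3 * K * √(B t) ≤ (K ^ 2 + 2 / 3 * R ^ n) / 2) :
    AT m ω (1 / 3) R K n ≤ Af m ω (1 / 3) R K n B t ∧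
      Af m ω (1 / 3) R K n B t ≤ 2 * AT m ω (1 / 3) R K n := by
  have hN0 : 0 < K ^ 2 + 2 / 3 * R ^ n := by positivity
  have hsq : 0 ≤ 4 / 3 * K * √(B t) := by positivity
  rw [AT_third m ω R n hK.ne', Af_third]
  constructor
  · gcongr <;> linarith
  · calc m / ω * K ^ 2 / (K ^ 2 + 2 / 3 * R ^ n - 4 / 3 * K * √(B t))
        ≤ m / ω * K ^ 2 / ((K ^ 2 + 2 / 3 * R ^ n) / 2) := by gcongr; linarith
      _ = 2 * (m / ω * K ^ 2 / (K ^ 2 + 2 / 3 * R ^ n)) := by field_simp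

lemma hasDerivAt_Af_third_nonpos {b' : ℝ} (hc : 0 ≤ m / ω) (hR : 0 < R) (hK : 0 < K)
    (hB : HasDerivAt B b' t) (hb : 0 < B t) (hb' : b' ≤ 0)
    (hN : 4 / 3 * K * √(B t) ≤ (K ^ 2 + 2 / 3 * R ^ n) / 2) :
    ∃ A', HasDerivAt (fun τ => Af m ω (1 / 3) R K n B τ) A' t ∧ A' ≤ 0 := by
  have hN0 : 0 < K ^ 2 + 2 / 3 * R ^ n - 4 / 3 * K * √(B t) := by
    have : 0 < K ^ 2 + 2 / 3 * R ^ n := by positivity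
    linarith
  have hden := ((hB.sqrt hb.ne').const_mul (4 / 3 * K)).const_sub (K ^ 2 + 2 / 3 * R ^ n)
  refine ⟨_, ((hasDerivAt_const t (m / ω * K ^ 2)).div hden hN0.ne').congr_of_eventuallyEq
    (Eventually.of_forall fun τ => Af_third m ω R K n B τ), ?_⟩
  have hb'' : b' / (2 * √(B t)) ≤ 0 := div_nonpos_of_nonpos_of_nonneg hb' (by positivity)
  apply div_nonpos_of_nonpos_of_nonneg _ (sq_nonneg _)
  rw [zero_mul, zero_sub, mul_neg, neg_neg]
  exact mul_nonpos_of_nonneg_of_nonpos (by positivity)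
    (mul_nonpos_of_nonneg_of_nonpos (by positivity) hb'')

end ThirdProfile

section Profile

variable {m R K d : ℝ} {n : ℕ} {B : ℝ → ℝ}

lemma wIn_of_le {σ τ : ℝ} (hb : 0 < B τ) (hσ : B τ ≤ σ) :
    wIn m R K d n B σ τ = Af m (omegaN n) (1 / 3) R K n B τ * (1 - 2 / 3 * B τ / σ) := by
  rw [wIn, phi_third_of_one_le d ((one_le_div hb).2 hσ), div_div_eq_mul_div]

lemma hasDerivAt_wIn_space {σ t : ℝ} (hb : 0 < B t) (hσ : B t < σ) :
    HasDerivAt (fun x => wIn m R K d n B x t)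
      (2 / 3 * Af m (omegaN n) (1 / 3) R K n B t * B t / σ ^ 2) σ := by
  have hσ0 : σ ≠ 0 := (hb.trans hσ).ne'
  have h := (((hasDerivAt_inv hσ0).const_mul (2 / 3 * B t)).const_sub 1).const_mul
    (Af m (omegaN n) (1 / 3) R K n B t)
  refine (h.congr_deriv (by field_simp)).congr_of_eventuallyEq ?_
  filter_upwards [Ioi_mem_nhds hσ] with x hx
  rw [wIn_of_le hb hx.le, ← div_eq_mul_inv]

lemma hasDerivAt_wIn_time {s t A' b' : ℝ}
    (hA : HasDerivAt (fun τ => Af m (omegaN n) (1 / 3) R K n B τ) A' t)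
    (hB : HasDerivAt B b' t) (hb : 0 < B t) (hbs : B t < s) :
    HasDerivAt (fun τ => wIn m R K d n B s τ)
      (A' * (1 - 2 / 3 * B t / s) + Af m (omegaN n) (1 / 3) R K n B t * (-(2 / 3) * b' / s)) t := by
  have h := hA.mul (((hB.const_mul (2 / 3)).div_const s).const_sub 1)
  refine (h.congr_deriv (by ring)).congr_of_eventuallyEq ?_
  filter_upwards [hB.continuousAt.preimage_mem_nhds (Ioo_mem_nhds hb hbs)] with τ hτ
  exact wIn_of_le hτ.1 hτ.2.le

end Profile

lemma slopeBound_eq {m R K : ℝ} (n : ℕ) (hK : K ≠ 0) :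
    slopeBound m R K n = n * (2 / 3 * AT m (omegaN n) (1 / 3) R K n) / K ^ 2 := by
  rw [slopeBound, AT_third m _ R n hK]; field_simp

lemma slopeBound_le {m R K A b s : ℝ} (n : ℕ) (hK : 0 < K) (hb : 0 < b) (hs : 0 < s)
    (hsK : s ≤ K * √b) (hT : 0 ≤ AT m (omegaN n) (1 / 3) R K n)
    (hTA : AT m (omegaN n) (1 / 3) R K n ≤ A) :
    slopeBound m R K n ≤ n * (2 / 3 * A * b / s ^ 2) := by
  have hs2 : s ^ 2 ≤ K ^ 2 * b := by
    calc s ^ 2 ≤ (K * √b) ^ 2 := pow_le_pow_left₀ hs.le hsK 2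
      _ = K ^ 2 * b := by rw [mul_pow, Real.sq_sqrt hb.le]
  have hTA' : AT m (omegaN n) (1 / 3) R K n / K ^ 2 ≤ A * b / s ^ 2 := by
    rw [div_le_div_iff₀ (by positivity) (by positivity)]
    nlinarith [mul_le_mul_of_nonneg_left hs2 hT,
      mul_le_mul_of_nonneg_right hTA (by positivity : 0 ≤ K ^ 2 * b)]
  calc slopeBound m R K n = n * (2 / 3) * (AT m (omegaN n) (1 / 3) R K n / K ^ 2) := by
        rw [slopeBound_eq n hK.ne']; ring
    _ ≤ n * (2 / 3) * (A * b / s ^ 2) := by gcongr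
    _ = n * (2 / 3 * A * b / s ^ 2) := by ring

lemma le_wIn_sub_drift {n : ℕ} {R m K d r s t : ℝ} {B : ℝ → ℝ} (hn : n ≠ 0) (hR : 0 < R)
    (hm : 0 ≤ m) (hb : 0 < B t) (hbs : B t < s) (hsr : s ≤ r)
    (hT : 0 ≤ AT m (omegaN n) (1 / 3) R K n)
    (hTA : AT m (omegaN n) (1 / 3) R K n ≤ Af m (omegaN n) (1 / 3) R K n B t)
    (hr_drift : m / omegaN n / R ^ n * r ≤ AT m (omegaN n) (1 / 3) R K n / 6) :
    AT m (omegaN n) (1 / 3) R K n / 6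
      ≤ wIn m R K d n B s t - m * n / (omegaN n * R ^ n) / n * s := by
  have hω := omegaN_pos hn
  have hs : 0 < s := hb.trans hbs
  have hφ : 1 / 3 ≤ 1 - 2 / 3 * B t / s := by
    have : B t / s ≤ 1 := (div_le_one hs).2 hbs.le
    linarith [mul_div_assoc (2 / 3 : ℝ) (B t) s]
  have hdrift : m * n / (omegaN n * R ^ n) / n * s ≤ AT m (omegaN n) (1 / 3) R K n / 6 := by
    calc m * n / (omegaN n * R ^ n) / n * s = m / omegaN n / R ^ n * s := by field_simp
      _ ≤ m / omegaN n / R ^ n * r := by gcongr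
      _ ≤ _ := hr_drift
  rw [wIn_of_le hb hbs.le]
  nlinarith [mul_le_mul hTA hφ (by norm_num) (hT.trans hTA)]

-- `r` plays the role of `K√B₀`.
lemma Pop_wIn_nonpos {n : ℕ} {R p q m χ K d ε κ r s t b' : ℝ} {B : ℝ → ℝ}
    (hn : 1 ≤ n) (hR : 0 < R) (hm : 0 < m) (hK : 0 < K) (hq : 1 ≤ q) (hpq : p ≤ q)
    (hχ : 0 ≤ χ) (hε : 0 < ε) (hWε : slopeBound m R K n ^ (p - q) ≤ (1 - 2 * ε) * χ)
    (hκ : 4 / 3 * AT m (omegaN n) (1 / 3) R K n * κ ≤ ε * χ * n ^ q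
      * (2 / 3 * AT m (omegaN n) (1 / 3) R K n) ^ q * K ^ (2 - 1 / (n : ℝ) - 2 * q))
    (hrN : 4 / 3 * r ≤ (K ^ 2 + 2 / 3 * R ^ n) / 2)
    (hr_drift : m / omegaN n / R ^ n * r ≤ AT m (omegaN n) (1 / 3) R K n / 6)
    (hr_ε : (1 - ε) / ε ≤ r ^ (1 / (n : ℝ) - 1) * (AT m (omegaN n) (1 / 3) R K n / 6))
    (hB : HasDerivAt B b' t) (hb'0 : b' ≤ 0) (hb' : -κ * B t ^ (1 - 1 / (2 * (n : ℝ))) ≤ b')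
    (hb : 0 < B t) (hbr : K * √(B t) ≤ r) (hs : s ∈ Set.Ioo (B t) (K * √(B t))) :
    Pop n χ p q (m * n / (omegaN n * R ^ n)) (wIn m R K d n B) s t ≤ 0 := by
  have hn0 : (0 : ℝ) < n := by exact_mod_cast hn
  have hω := omegaN_pos (n := n) (by omega)
  have hs0 : 0 < s := hb.trans hs.1
  have hT : 0 < AT m (omegaN n) (1 / 3) R K n := by rw [AT_third m _ R n hK.ne']; positivity
  have hN : 4 / 3 * K * √(B t) ≤ (K ^ 2 + 2 / 3 * R ^ n) / 2 := by
    linarith [mul_le_mul_of_nonneg_left hbr (by norm_num : (0 : ℝ) ≤ 4 / 3)]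
  obtain ⟨hTA, hAT⟩ := AT_le_Af_third (div_pos hm hω).le hR hK hN
  obtain ⟨A', hA', hA'0⟩ := hasDerivAt_Af_third_nonpos (div_pos hm hω).le hR hK hB hb hb'0 hN
  have hsr : s ≤ r := hs.2.le.trans hbr
  refine Pop_nonpos_of_le (u := fun σ => 2 / 3 * Af m (omegaN n) (1 / 3) R K n B t * B t / σ ^ 2)
    (by omega) hs0 hpq hχ hε (by unfold slopeBound; positivity) (hasDerivAt_wIn_time hA' hB hb hs.1)
    (eventually_gt_nhds hs.1 |>.mono fun σ hσ => hasDerivAt_wIn_space hb hσ)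
    -- the diffusion bound holds whatever `∂ₛₛ w_in` is, so its value is never needed
    ((hasDerivAt_const s _).div (hasDerivAt_pow 2 s) (by positivity)) ?_ hWε ?_ ?_
  · exact slopeBound_le n hK hb hs0 hs.2.le hT.le hTA
  · have hz : r ^ (1 / (n : ℝ) - 1) ≤ s ^ (1 / (n : ℝ) - 1) :=
      Real.rpow_le_rpow_of_nonpos hs0 hsr (by
        have : 1 / (n : ℝ) ≤ 1 := by rw [div_le_one hn0]; exact_mod_cast hn
        linarith)
    have hy := le_wIn_sub_drift (d := d) (by omega) hR hm.le hb hs.1 hsr hT.le hTA hr_drift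
    exact hr_ε.trans (mul_le_mul hz hy (by positivity) (by positivity))
  · exact time_deriv_le hn0 hq hK hχ hε.le hT hTA hAT hA'0 hb hs.1 hs.2.le hb'0 hb' hκ

lemma exists_pos_slopeBound_rpow_lt {n : ℕ} {R p q m χ : ℝ} (hn : n ≠ 0) (hR : 0 < R)
    (hm : 0 < m) (hχ : (m * n / (omegaN n * R ^ n)) ^ (p - q) < χ) :
    ∃ K, 0 < K ∧ slopeBound m R K n ^ (p - q) < χ := by
  have hω := omegaN_pos hn
  have hRn := pow_pos hR n
  have h0 : slopeBound m R 0 n = m * n / (omegaN n * R ^ n) := by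
    rw [slopeBound]; field_simp; ring
  have hcont : ContinuousAt (fun K => slopeBound m R K n ^ (p - q)) 0 := by
    refine ContinuousAt.rpow_const ?_ (Or.inl (by rw [h0]; positivity))
    unfold slopeBound
    exact continuousAt_const.div (by fun_prop) (by positivity)
  have hev : ∀ᶠ K in 𝓝[>] 0, slopeBound m R K n ^ (p - q) < χ :=
    eventually_nhdsWithin_of_eventually_nhds
      (hcont.eventually_lt continuousAt_const (by rwa [h0]))
  obtain ⟨K, hK, hKpos⟩ := (hev.and self_mem_nhdsWithin).exists
  exact ⟨K, hKpos, hK⟩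

lemma exists_small_radius {n : ℕ} (hn : 2 ≤ n) {a L : ℝ} (ha : 0 < a) (hL : 0 < L) (c C : ℝ) :
    ∃ r, 0 < r ∧ r < a ∧ c * r < L ∧ C ≤ r ^ (1 / (n : ℝ) - 1) * L := by
  have hexp : 1 / (n : ℝ) - 1 < 0 := by
    have : (2 : ℝ) ≤ n := by exact_mod_cast hn
    rw [sub_neg, div_lt_one (by linarith)]; linarith
  have hlin : ∀ᶠ r in 𝓝 (0 : ℝ), r < a ∧ c * r < L :=
    (eventually_lt_nhds ha).and ((continuous_const.mul continuous_id).continuousAt.eventually_lt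
      continuousAt_const (by simpa using hL))
  have hpow : ∀ᶠ r in 𝓝[>] (0 : ℝ), C ≤ r ^ (1 / (n : ℝ) - 1) * L :=
    ((tendsto_rpow_neg_nhdsGT_zero hexp).atTop_mul_const hL).eventually_ge_atTop _
  obtain ⟨r, ⟨⟨hra, hrc⟩, hrC⟩, hr⟩ :=
    (((eventually_nhdsWithin_of_eventually_nhds hlin).and hpow).and self_mem_nhdsWithin).exists
  exact ⟨r, hr, hra, hrc, hrC⟩

theorem stmt18_general (n : ℕ) (hn : 2 ≤ n) (R p q m χ : ℝ) (hR : 0 < R)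
    (hq : 1 ≤ q) (hpq : p ≤ q) (hm : 0 < m)
    (hχ : ((m * n) / (omegaN n * R ^ n)) ^ (p - q) < χ)
    (d : ℝ) :
    ∃ K : ℝ, 0 < K ∧ ∃ κ : ℝ, 0 < κ ∧ ∃ B0 ∈ Set.Ioo (0 : ℝ) 1,
      K * Real.sqrt B0 < R ^ n ∧
      ∀ T : ℝ, 0 < T → ∀ B B' : ℝ → ℝ,
        (∀ t ∈ Set.Ico (0 : ℝ) T, HasDerivAt B (B' t) t) →
        ContinuousOn B' (Set.Ico 0 T) →
        (∀ t ∈ Set.Ico (0 : ℝ) T, 0 < B t) →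
        AntitoneOn B (Set.Ico 0 T) →
        B 0 ≤ B0 →
        (∀ t ∈ Set.Ioo (0 : ℝ) T, B' t ≥ -κ * (B t) ^ (1 - 1 / (2 * (n : ℝ)))) →
        ∀ t ∈ Set.Ioo (0 : ℝ) T, ∀ s ∈ Set.Ioo (B t) (K * Real.sqrt (B t)),
          Pop n χ p q ((m * n) / (omegaN n * R ^ n))
            (fun σ τ => Af m (omegaN n) (1/3) R K n B τ * phi (1/3) d (σ / B τ)) s t
            ≤ 0 := by
  obtain ⟨K, hK, hKχ⟩ := exists_pos_slopeBound_rpow_lt (by omega) hR hm hχ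
  have hω := omegaN_pos (n := n) (by omega)
  have hW : 0 < slopeBound m R K n ^ (p - q) := by unfold slopeBound; positivity
  have hχ0 : 0 < χ := hW.trans hKχ
  obtain ⟨ε, hε, hWε⟩ := exists_pos_eq_one_sub_two_mul_mul hW.le hKχ
  have hT : 0 < AT m (omegaN n) (1 / 3) R K n := by rw [AT_third m _ R n hK.ne']; positivity
  set T := AT m (omegaN n) (1 / 3) R K n
  set κ := ε * χ * n ^ q * (2 / 3 * T) ^ q * K ^ (2 - 1 / (n : ℝ) - 2 * q) / (4 / 3 * T)
  obtain ⟨r, hr, hra, hr_drift, hr_ε⟩ := exists_small_radius hn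
    (a := min K (min (R ^ n) (3 / 8 * (K ^ 2 + 2 / 3 * R ^ n)))) (by positivity)
    (by positivity : 0 < T / 6) (m / omegaN n / R ^ n) ((1 - ε) / ε)
  simp only [lt_min_iff] at hra
  obtain ⟨hrK, hrR, hrN⟩ := hra
  refine ⟨K, hK, κ, by positivity, (r / K) ^ 2,
    ⟨by positivity, pow_lt_one₀ (by positivity) ((div_lt_one hK).2 hrK) two_ne_zero⟩,
    by rwa [Real.sqrt_sq (by positivity), mul_div_cancel₀ _ hK.ne'], ?_⟩
  intro T' hT' B B' hB _ hBpos hBanti hB0 hB' t ht s hs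
  have htI : t ∈ Set.Ico 0 T' := Set.Ioo_subset_Ico_self ht
  exact Pop_wIn_nonpos (by omega) hR hm hK hq hpq hχ0.le hε hWε.le
    (mul_div_cancel₀ _ (by positivity)).le (by linarith) hr_drift.le hr_ε (hB t htI)
    ((hB t htI).nonpos_of_antitoneOn_of_mem_nhds hBanti (Ico_mem_nhds ht.1 ht.2)) (hB' t ht)
    (hBpos t htI) (mul_sqrt_le_of_le_div_sq hK hr.le
      ((hBanti ⟨le_rfl, hT'⟩ htI ht.1.le).trans hB0)) hs

/-- Intermediate region, `n ≥ 2`, `λ = 1/3`: for every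
`χ > (mn/(ω_n Rⁿ))^{p−q}` there exist `K > 0`, `κ_n > 0` and `B₀ₙ ∈ (0,1)` with
`K√B₀ₙ < Rⁿ` such that every positive nonincreasing `B ∈ C¹([0,T))` with `B(0) ≤ B₀ₙ`
and `B' ≥ −κ_n B^{1−1/(2n)}` makes `(𝒫 w_in) ≤ 0` on the intermediate region. -/
theorem stmt18 (n : ℕ) (hn : 2 ≤ n) (R p q m χ : ℝ) (hR : 0 < R)
    (hp : 1 ≤ p) (hq : 1 ≤ q) (hpq : p ≤ q) (hm : 0 < m)
    (hχ : ((m * n) / (omegaN n * R ^ n)) ^ (p - q) < χ)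
    (d : ℝ) (hd : d ∈ Set.Ioo (1 : ℝ) 2) (hde : (2 - d) * Real.exp d - 2 = 0) :
    ∃ K : ℝ, 0 < K ∧ ∃ κ : ℝ, 0 < κ ∧ ∃ B0 ∈ Set.Ioo (0 : ℝ) 1,
      K * Real.sqrt B0 < R ^ n ∧
      ∀ T : ℝ, 0 < T → ∀ B B' : ℝ → ℝ,
        (∀ t ∈ Set.Ico (0 : ℝ) T, HasDerivAt B (B' t) t) →
        ContinuousOn B' (Set.Ico 0 T) →
        (∀ t ∈ Set.Ico (0 : ℝ) T, 0 < B t) →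
        AntitoneOn B (Set.Ico 0 T) →
        B 0 ≤ B0 →
        (∀ t ∈ Set.Ioo (0 : ℝ) T, B' t ≥ -κ * (B t) ^ (1 - 1 / (2 * (n : ℝ)))) →
        ∀ t ∈ Set.Ioo (0 : ℝ) T, ∀ s ∈ Set.Ioo (B t) (K * Real.sqrt (B t)),
          Pop n χ p q ((m * n) / (omegaN n * R ^ n))
            (fun σ τ => Af m (omegaN n) (1/3) R K n B τ * phi (1/3) d (σ / B τ)) s t
            ≤ 0 :=
  stmt18_general n hn R p q m χ hR hq hpq hm hχ d
end
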